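/- Let A be a graded-commutative superalgebra over a field of characteristic not 2, R = A_0^ev ⊕ A_1^odd, and I a homogeneous radical ideal of R. Then I^+ := I ⊕ A_0^odd ⊕ A_1^ev is a radical ideal of A in the sense that I^+ equals the set of all x ∈ A with x^n ∈ I^+ for some natural number n. -/

import Mathlib

/-- A graded-commutative graded superalgebra over `k`: a `ℤ × ZMod 2`-graded
`k`-algebra satisfying the sign rule `ab = (-1)^(|a|·|b| + deg a · deg b) ba`
for homogeneous elements. -/
structure GradedSuperalgebra (k A : Type) [Field k] [Ring A] [Algebra k A] where
  grading : ℤ × ZMod 2 → Submodule k A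
  one_mem : (1 : A) ∈ grading (0, 0)
  mul_mem : ∀ {i j : ℤ × ZMod 2} {a b : A},
    a ∈ grading i → b ∈ grading j → a * b ∈ grading (i + j)
  internal : DirectSum.IsInternal grading
  comm : ∀ {m n : ℤ} {s t : ZMod 2} {a b : A}, a ∈ grading (m, s) → b ∈ grading (n, t) →
    a * b = ((-1 : k) ^ ((s * t).val + (m * n).natAbs)) • (b * a)

namespace GradedSuperalgebra

variable {k A : Type} [Field k] [Ring A] [Algebra k A] (GS : GradedSuperalgebra k A)

/-- The sum of the graded pieces whose index satisfies a predicate. -/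
def piece (P : ℤ × ZMod 2 → Prop) : Submodule k A :=
  ⨆ p : {p : ℤ × ZMod 2 // P p}, GS.grading p

/-- `R = A₀ᵉᵛ ⊕ A₁ᵒᵈᵈ`: even ℤ-degree with parity `0` together with odd ℤ-degree
with parity `1`; an ordinary-commutative subalgebra of `A`. -/
def Rsub : Submodule k A :=
  GS.piece fun p => (Even p.1 ∧ p.2 = 0) ∨ (Odd p.1 ∧ p.2 = 1)

/-- `A₀ᵉᵛ`: even ℤ-degree, parity `0`. -/
def A0ev : Submodule k A := GS.piece fun p => Even p.1 ∧ p.2 = 0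

/-- `A₁ᵒᵈᵈ`: odd ℤ-degree, parity `1`. -/
def A1odd : Submodule k A := GS.piece fun p => Odd p.1 ∧ p.2 = 1

/-- `A₀ᵒᵈᵈ`: odd ℤ-degree, parity `0`. -/
def A0odd : Submodule k A := GS.piece fun p => Odd p.1 ∧ p.2 = 0

/-- `A₁ᵉᵛ`: even ℤ-degree, parity `1`. -/
def A1ev : Submodule k A := GS.piece fun p => Even p.1 ∧ p.2 = 1

/-- A submodule of `A` is homogeneous if it is spanned by its homogeneous elements. -/
def IsHomogeneous (I : Submodule k A) : Prop :=
  I = Submodule.span k {x : A | x ∈ I ∧ ∃ p, x ∈ GS.grading p}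

end GradedSuperalgebra

/-!
Put `S = A₀ᵒᵈᵈ ⊕ A₁ᵉᵛ`. Then `A = R ⊕ S` is the splitting of `A` by the parity of the total
degree, so `RR ⊆ R` and `RS + SR ⊆ S`. A homogeneous `a ∈ S` anticommutes with itself, hence
`a² = 0` because `2 ≠ 0`; for homogeneous `a, b ∈ S` this gives `(ab)² = ±a²b² = 0`, so `ab ∈ I`
by radicality. Thus `SS ⊆ I` and `I ⊕ S` is a two-sided ideal of `A`. Writing `x = r + s` with
`r ∈ R`, `s ∈ S`, we get `xⁿ ≡ rⁿ` modulo `I ⊕ S`, so `xⁿ ∈ I ⊕ S` forces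
`rⁿ ∈ (I ⊕ S) ∩ R = I`, and then `r ∈ I`.
-/

namespace Submodule

variable {k A : Type*} [CommRing k] [Ring A] [Algebra k A]

theorem pow_mem_of_one_le_of_mul_le {R : Submodule k A} (h1 : 1 ≤ R) (hRR : R * R ≤ R)
    {r : A} (hr : r ∈ R) (n : ℕ) : r ^ n ∈ R := by
  induction n with
  | zero => exact pow_zero r ▸ one_le.1 h1
  | succ n ih => exact pow_succ r n ▸ hRR (mul_mem_mul ih hr)

theorem add_pow_sub_pow_mem {J : Submodule k A} (hleft : ⊤ * J ≤ J) (hright : J * ⊤ ≤ J)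
    (r : A) {s : A} (hs : s ∈ J) (n : ℕ) : (r + s) ^ n - r ^ n ∈ J := by
  induction n with
  | zero => simp
  | succ n ih =>
    have h : (r + s) ^ (n + 1) - r ^ (n + 1) = ((r + s) ^ n - r ^ n) * (r + s) + r ^ n * s := by
      noncomm_ring
    rw [h]
    exact J.add_mem (hright (mul_mem_mul ih mem_top)) (hleft (mul_mem_mul mem_top hs))

variable {R S I : Submodule k A}

theorem top_mul_sup_le (hcodisj : Codisjoint R S) (hIle : I ≤ R) (hRI : R * I ≤ I)
    (hRS : R * S ≤ S) (hSR : S * R ≤ S) (hSS : S * S ≤ I) : ⊤ * (I ⊔ S) ≤ I ⊔ S := by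
  have hSI : S * I ≤ S := (by gcongr : S * I ≤ S * R).trans hSR
  rw [← hcodisj.eq_top]
  simp only [sup_mul, mul_sup, sup_le_iff]
  exact ⟨⟨hRI.trans le_sup_left, hSI.trans le_sup_right⟩,
    hRS.trans le_sup_right, hSS.trans le_sup_left⟩

theorem sup_mul_top_le (hcodisj : Codisjoint R S) (hIle : I ≤ R) (hIR : I * R ≤ I)
    (hRS : R * S ≤ S) (hSR : S * R ≤ S) (hSS : S * S ≤ I) : (I ⊔ S) * ⊤ ≤ I ⊔ S := by
  have hIS : I * S ≤ S := (by gcongr : I * S ≤ R * S).trans hRS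
  rw [← hcodisj.eq_top]
  simp only [sup_mul, mul_sup, sup_le_iff]
  exact ⟨⟨hIR.trans le_sup_left, hSR.trans le_sup_right⟩,
    hIS.trans le_sup_right, hSS.trans le_sup_left⟩

theorem mem_sup_iff_exists_pow_mem_sup (hcompl : IsCompl R S) (h1 : 1 ≤ R) (hRR : R * R ≤ R)
    (hRS : R * S ≤ S) (hSR : S * R ≤ S) (hIle : I ≤ R) (hRI : R * I ≤ I) (hIR : I * R ≤ I)
    (hSS : S * S ≤ I) (hrad : ∀ r ∈ R, ∀ n : ℕ, r ^ n ∈ I → r ∈ I) (x : A) :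
    x ∈ I ⊔ S ↔ ∃ n : ℕ, x ^ n ∈ I ⊔ S := by
  refine ⟨fun hx => ⟨1, by rwa [pow_one]⟩, fun ⟨n, hxn⟩ => ?_⟩
  obtain ⟨r, hr, s, hs, rfl⟩ := mem_sup.1 (hcompl.codisjoint.eq_top ▸ mem_top : x ∈ R ⊔ S)
  have hrn : r ^ n ∈ I ⊔ S := by
    simpa using sub_mem hxn <| add_pow_sub_pow_mem
      (top_mul_sup_le hcompl.codisjoint hIle hRI hRS hSR hSS)
      (sup_mul_top_le hcompl.codisjoint hIle hIR hRS hSR hSS) r (mem_sup_right hs) n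
  have hIS_inf_R : (I ⊔ S) ⊓ R = I := by
    rw [sup_inf_assoc_of_le S hIle, hcompl.disjoint.symm.eq_bot, sup_bot_eq]
  have hrnI : r ^ n ∈ I := hIS_inf_R ▸ ⟨hrn, pow_mem_of_one_le_of_mul_le h1 hRR hr n⟩
  exact mem_sup.2 ⟨r, hrad r hr n hrnI, s, hs, rfl⟩

end Submodule

namespace GradedSuperalgebra

variable {k A : Type} [Field k] [Ring A] [Algebra k A] (GS : GradedSuperalgebra k A)

theorem piece_eq_biSup (P : ℤ × ZMod 2 → Prop) :
    GS.piece P = ⨆ p ∈ {p | P p}, GS.grading p := by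
  rw [piece, iSup_subtype]
  rfl

theorem grading_le_piece {P : ℤ × ZMod 2 → Prop} {p : ℤ × ZMod 2} (hp : P p) :
    GS.grading p ≤ GS.piece P :=
  le_iSup (fun q : {q // P q} => GS.grading q) ⟨p, hp⟩

theorem piece_sup_piece (P Q : ℤ × ZMod 2 → Prop) :
    GS.piece P ⊔ GS.piece Q = GS.piece fun p => P p ∨ Q p := by
  simp only [piece_eq_biSup, ← iSup_union]
  rfl

theorem isCompl_piece (P : ℤ × ZMod 2 → Prop) :
    IsCompl (GS.piece P) (GS.piece fun p => ¬ P p) := by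
  refine ⟨?_, codisjoint_iff.2 ?_⟩
  · simp only [piece_eq_biSup]
    exact GS.internal.submodule_iSupIndep.disjoint_biSup_biSup
      (Set.disjoint_left.2 fun _ hP hnP => hnP hP)
  · rw [piece_sup_piece, piece_eq_biSup, ← GS.internal.submodule_iSup_eq_top]
    simp only [em, Set.mem_ofPred_eq, iSup_pos]

theorem piece_mul_piece_le {P Q : ℤ × ZMod 2 → Prop} {M : Submodule k A}
    (h : ∀ p q, P p → Q q → ∀ a ∈ GS.grading p, ∀ b ∈ GS.grading q, a * b ∈ M) :
    GS.piece P * GS.piece Q ≤ M := by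
  simp only [piece, Submodule.iSup_mul, Submodule.mul_iSup, iSup_le_iff, Submodule.mul_le]
  exact fun q p a ha b hb => h p q p.2 q.2 a ha b hb

theorem piece_mul_piece_le_piece {P Q R : ℤ × ZMod 2 → Prop}
    (h : ∀ p q, P p → Q q → R (p + q)) : GS.piece P * GS.piece Q ≤ GS.piece R :=
  GS.piece_mul_piece_le fun p q hp hq _ ha _ hb =>
    GS.grading_le_piece (h p q hp hq) (GS.mul_mem ha hb)

def totalParity : ℤ × ZMod 2 →+ ZMod 2 :=
  (Int.castAddHom (ZMod 2)).coprod (AddMonoidHom.id _)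

theorem totalParity_apply (p : ℤ × ZMod 2) : totalParity p = (p.1 : ZMod 2) + p.2 := rfl

theorem totalParity_eq_zero_iff (p : ℤ × ZMod 2) :
    totalParity p = 0 ↔ (Even p.1 ∧ p.2 = 0) ∨ (Odd p.1 ∧ p.2 = 1) := by
  rw [totalParity_apply, ← ZMod.intCast_eq_zero_iff_even, ← ZMod.intCast_eq_one_iff_odd]
  generalize (p.1 : ZMod 2) = a
  generalize p.2 = b
  decide +revert

theorem totalParity_eq_one_iff (p : ℤ × ZMod 2) :
    totalParity p = 1 ↔ (Odd p.1 ∧ p.2 = 0) ∨ (Even p.1 ∧ p.2 = 1) := by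
  rw [totalParity_apply, ← ZMod.intCast_eq_zero_iff_even, ← ZMod.intCast_eq_one_iff_odd]
  generalize (p.1 : ZMod 2) = a
  generalize p.2 = b
  decide +revert

theorem odd_sign_exponent_self {p : ℤ × ZMod 2} (hp : totalParity p = 1) :
    Odd ((p.2 * p.2).val + (p.1 * p.1).natAbs) := by
  rw [totalParity_apply] at hp
  rw [Int.natAbs_mul, Nat.odd_add, Nat.even_mul, or_self, Int.natAbs_even,
    ← ZMod.intCast_eq_zero_iff_even]
  revert hp
  generalize (p.1 : ZMod 2) = a
  generalize p.2 = b
  decide +revert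

theorem mul_self_eq_zero_of_totalParity_eq_one (h2 : (2 : k) ≠ 0) {p : ℤ × ZMod 2}
    (hp : totalParity p = 1) {a : A} (ha : a ∈ GS.grading p) : a * a = 0 := by
  have hcomm := GS.comm ha ha
  rw [(odd_sign_exponent_self hp).neg_one_pow, neg_one_smul, eq_neg_iff_add_eq_zero, ← two_smul k]
    at hcomm
  exact (smul_eq_zero.1 hcomm).resolve_left h2

theorem mul_mul_self_eq_zero {p q : ℤ × ZMod 2} {a b : A} (ha : a ∈ GS.grading p)
    (hb : b ∈ GS.grading q) (haa : a * a = 0) : a * b * (a * b) = 0 := by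
  rw [mul_assoc, ← mul_assoc b, GS.comm hb ha, smul_mul_assoc, mul_smul_comm, ← mul_assoc,
    ← mul_assoc, haa, zero_mul, zero_mul, smul_zero]

def parityPiece (e : ZMod 2) : Submodule k A := GS.piece fun p => totalParity p = e

theorem Rsub_eq_parityPiece_zero : GS.Rsub = GS.parityPiece 0 := by
  simp only [parityPiece, totalParity_eq_zero_iff]
  rfl

theorem A0odd_sup_A1ev_eq_parityPiece_one : GS.A0odd ⊔ GS.A1ev = GS.parityPiece 1 := by
  simp only [parityPiece, totalParity_eq_one_iff, A0odd, A1ev, piece_sup_piece]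

theorem isCompl_parityPiece_zero_one : IsCompl (GS.parityPiece 0) (GS.parityPiece 1) := by
  have hne : ∀ e : ZMod 2, e ≠ 0 ↔ e = 1 := by decide
  simpa only [parityPiece, hne] using GS.isCompl_piece (totalParity · = 0)

theorem one_le_parityPiece_zero : 1 ≤ GS.parityPiece 0 :=
  Submodule.one_le.2 (GS.grading_le_piece (map_zero totalParity) GS.one_mem)

theorem parityPiece_mul_parityPiece_le (e f : ZMod 2) :
    GS.parityPiece e * GS.parityPiece f ≤ GS.parityPiece (e + f) :=
  GS.piece_mul_piece_le_piece fun p q hp hq => by rw [map_add, hp, hq]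

theorem parityPiece_one_mul_self_le (h2 : (2 : k) ≠ 0) {I : Submodule k A}
    (hrad : ∀ x ∈ GS.parityPiece 0, ∀ n : ℕ, x ^ n ∈ I → x ∈ I) :
    GS.parityPiece 1 * GS.parityPiece 1 ≤ I :=
  GS.piece_mul_piece_le fun p q hp hq a ha b hb => by
    have hab : a * b ∈ GS.parityPiece 0 :=
      GS.grading_le_piece (by rw [map_add, hp, hq]; rfl) (GS.mul_mem ha hb)
    refine hrad (a * b) hab 2 ?_
    rw [sq, GS.mul_mul_self_eq_zero ha hb (GS.mul_self_eq_zero_of_totalParity_eq_one h2 hp ha)]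
    exact I.zero_mem

end GradedSuperalgebra

theorem statement2_general {k A : Type} [Field k] [Ring A] [Algebra k A]
    (h2 : (2 : k) ≠ 0) (GS : GradedSuperalgebra k A)
    (I : Submodule k A)
    (hIR : I ≤ GS.Rsub)
    (hIdeal : ∀ r ∈ GS.Rsub, ∀ x ∈ I, r * x ∈ I ∧ x * r ∈ I)
    (hIrad : ∀ x ∈ GS.Rsub, ∀ n : ℕ, x ^ n ∈ I → x ∈ I) :
    ∀ x : A, x ∈ I ⊔ GS.A0odd ⊔ GS.A1ev ↔
      ∃ n : ℕ, x ^ n ∈ I ⊔ GS.A0odd ⊔ GS.A1ev := by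
  have hRsubI : GS.Rsub * I ≤ I := Submodule.mul_le.2 fun r hr x hx => (hIdeal r hr x hx).1
  have hIRsub : I * GS.Rsub ≤ I := Submodule.mul_le.2 fun x hx r hr => (hIdeal r hr x hx).2
  rw [GS.Rsub_eq_parityPiece_zero] at hIR hRsubI hIRsub hIrad
  simp only [sup_assoc, GS.A0odd_sup_A1ev_eq_parityPiece_one]
  exact Submodule.mem_sup_iff_exists_pow_mem_sup GS.isCompl_parityPiece_zero_one
    GS.one_le_parityPiece_zero (GS.parityPiece_mul_parityPiece_le 0 0)
    (GS.parityPiece_mul_parityPiece_le 0 1) (GS.parityPiece_mul_parityPiece_le 1 0)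
    hIR hRsubI hIRsub (GS.parityPiece_one_mul_self_le h2 hIrad) hIrad

theorem statement2 {k A : Type} [Field k] [Ring A] [Algebra k A]
    (h2 : (2 : k) ≠ 0) (GS : GradedSuperalgebra k A)
    (I : Submodule k A)
    (hIR : I ≤ GS.Rsub)
    (hIdeal : ∀ r ∈ GS.Rsub, ∀ x ∈ I, r * x ∈ I ∧ x * r ∈ I)
    (hIhom : GS.IsHomogeneous I)
    (hIrad : ∀ x ∈ GS.Rsub, ∀ n : ℕ, x ^ n ∈ I → x ∈ I) :
    ∀ x : A, x ∈ I ⊔ GS.A0odd ⊔ GS.A1ev ↔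
      ∃ n : ℕ, x ^ n ∈ I ⊔ GS.A0odd ⊔ GS.A1ev :=
  statement2_general h2 GS I hIR hIdeal hIrad
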